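/- arXiv:1501.01135 — 2 statements merged into one kernel-verified Lean document; each statement's English description precedes it below -/
import Mathlib

section
/- Let k ≥ 2 and r be positive integers with r < k and let p = (p_1,…,p_k) be a tuple of non-negative integers with S_{p,r} non-empty. Then the probability, for (S,f) uniform on Ω, of the event { S_{f(1)} = {2,3,…,k} and S_{f(i)} ≠ [k] for all i∈[k−1] } equals |M_{q,r−1}| / |S_{p,r}|, where q = (p_1, p_2−1, p_3−1, …, p_k−1) (with M_{q,r−1} empty if some entry of q is negative). -/
open Finset

/-- The cyclic interval `]i,j]` of `[k] = {1,…,k}`, realized inside `ZMod k`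
(the element `k` of `[k]` is represented by `0 : ZMod k`). -/
def cyc (k : ℕ) [NeZero k] (i j : ZMod k) : Finset (ZMod k) :=
  Finset.univ.filter fun x => 1 ≤ (x - i).val ∧ (x - i).val ≤ (j - i).val

/-- Membership in `𝒮_{p,r}` : each `j ∈ [k]` belongs to exactly `p j` of the sets `S_1,…,S_r`. -/
def SprMem (k r : ℕ) [NeZero k] (p : ZMod k → ℕ) (S : Fin r → Finset (ZMod k)) : Prop :=
  ∀ j : ZMod k, Nat.card {i : Fin r // j ∈ S i} = p j

/-- Membership in `ℳ_{p,r}` : member of `𝒮_{p,r}` all of whose sets are proper subsets of `[k]`. -/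
def MprMem (k r : ℕ) [NeZero k] (p : ZMod k → ℕ) (S : Fin r → Finset (ZMod k)) : Prop :=
  SprMem k r p S ∧ ∀ i, S i ≠ Finset.univ

/-- `|ℳ_{p,r}|`. -/
noncomputable def Mcard (k r : ℕ) [NeZero k] (p : ZMod k → ℕ) : ℕ :=
  Nat.card {S : Fin r → Finset (ZMod k) // MprMem k r p S}

/-- `|𝒮_{p,r}|`. -/
noncomputable def Scard (k r : ℕ) [NeZero k] (p : ZMod k → ℕ) : ℕ :=
  Nat.card {S : Fin r → Finset (ZMod k) // SprMem k r p S}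

/-- `|ℳ_{q,r}|` for an integer-valued tuple `q` (empty if some entry of `q` is negative). -/
noncomputable def McardZ (k r : ℕ) [NeZero k] (q : ZMod k → ℤ) : ℕ :=
  Nat.card {S : Fin r → Finset (ZMod k) //
    (∀ j : ZMod k, (Nat.card {i : Fin r // j ∈ S i} : ℤ) = q j) ∧ ∀ i, S i ≠ Finset.univ}

/-- `alphaRel k S i j` holds iff `j = α(i,S)`. -/
def alphaRel (k : ℕ) [NeZero k] (S : Finset (ZMod k)) (i j : ZMod k) : Prop :=
  if S = Finset.univ then j = i else j ∉ S ∧ cyc k i (j - 1) ⊆ S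

/-- `betaRel k S i j` holds iff `j = β(i,S)`. -/
def betaRel (k : ℕ) [NeZero k] (S : Finset (ZMod k)) (i j : ZMod k) : Prop :=
  if S = Finset.univ then j = i else j + 1 ∉ S ∧ cyc k i j ⊆ S

/-- `gammaRel k S i j` holds iff `j = γ(i,S)`. -/
def gammaRel (k : ℕ) [NeZero k] (S : Finset (ZMod k)) (i j : ZMod k) : Prop :=
  if S = Finset.univ then j = i
  else if i ∈ S then j = i - 1
  else j + 1 ∉ S ∧ cyc k i j ⊆ S

/-- The digraph on `[k]` with the `k-1` arcs `(i, ζ(i, S_{f i}))` for `i ∈ [k-1]`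
(the nonzero elements of `ZMod k`) is a tree, i.e. a spanning tree oriented toward
the root `k` (represented by `0`): following the arcs from any vertex reaches the root. -/
def GIsTree (k r : ℕ) [NeZero k] (zeta : Finset (ZMod k) → ZMod k → ZMod k → Prop)
    (S : Fin r → Finset (ZMod k)) (f : {i : ZMod k // i ≠ 0} → Fin r) : Prop :=
  ∃ g : ZMod k → ZMod k, g 0 = 0 ∧
    (∀ i : {i : ZMod k // i ≠ 0}, zeta (S (f i)) i.1 (g i.1)) ∧
    ∀ x : ZMod k, ∃ n : ℕ, g^[n] x = 0

/-- Sample space: pairs of a tuple `S ∈ ℳ_{p,r}` and a surjection `f : [k-1] → [r]`,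
with the uniform probability measure. -/
abbrev OmM (k r : ℕ) [NeZero k] (p : ZMod k → ℕ) : Type :=
  {om : (Fin r → Finset (ZMod k)) × ({i : ZMod k // i ≠ 0} → Fin r) //
    MprMem k r p om.1 ∧ Function.Surjective om.2}

/-- Sample space `Ω`: pairs of a tuple `S ∈ 𝒮_{p,r}` and a surjection `f : [k-1] → [r]`,
with the uniform probability measure. -/
abbrev OmS (k r : ℕ) [NeZero k] (p : ZMod k → ℕ) : Type :=
  {om : (Fin r → Finset (ZMod k)) × ({i : ZMod k // i ≠ 0} → Fin r) //
    SprMem k r p om.1 ∧ Function.Surjective om.2}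

/-- Uniform probability of an event `A` in a (finite) sample space `Om`. -/
noncomputable def PrU {Om : Type} (A : Set Om) : ℚ :=
  (Nat.card A : ℚ) / (Nat.card Om : ℚ)

/-- The `Pr`-determinant of a `k × k` matrix of events (rows and columns indexed by
`[k]`, i.e. by `ZMod k`). -/
noncomputable def Pdet {k : ℕ} [NeZero k] {Om : Type} (E : ZMod k → ZMod k → Set Om) : ℚ :=
  ∑ pi : Equiv.Perm (ZMod k), ((Equiv.Perm.sign pi : ℤ) : ℚ) * PrU (⋂ i : ZMod k, E i (pi i))

/-- The matrix of events `M_α`: `M_{α,i,j} = I^{f(i)}_{i,j}` for `i ∈ [k-1]`, and the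
row of `i = k` (i.e. `0`) is constant equal to `Ω`. -/
def Malpha (k r : ℕ) [NeZero k] (p : ZMod k → ℕ) (i j : ZMod k) : Set (OmS k r p) :=
  {om : OmS k r p | ∀ hi : i ≠ 0, cyc k i j ⊆ om.1.1 (om.1.2 ⟨i, hi⟩)}

/-- The matrix of events `M_β`: `M_{β,i,j} = J^{f(i)}_{i,j+1}` for `i ∈ [k-1]`, and the
row of `i = k` (i.e. `0`) is constant equal to `Ω`. -/
def Mbeta (k r : ℕ) [NeZero k] (p : ZMod k → ℕ) (i j : ZMod k) : Set (OmS k r p) :=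
  {om : OmS k r p | ∀ hi : i ≠ 0,
    if i = j + 1 then om.1.1 (om.1.2 ⟨i, hi⟩) = Finset.univ
    else cyc k i (j + 1) ⊆ om.1.1 (om.1.2 ⟨i, hi⟩)}

/-- Membership of `om` in the event `J^{f(i)}_{a,b}`. -/
def Jmem (k r : ℕ) [NeZero k] (p : ZMod k → ℕ) (om : OmS k r p)
    (i : {i : ZMod k // i ≠ 0}) (a b : ZMod k) : Prop :=
  if a = b then om.1.1 (om.1.2 i) = Finset.univ else cyc k a b ⊆ om.1.1 (om.1.2 i)

/-! Because `f` is surjective, the event says that `S ∈ ℳ_{p,r}` and `S_{f(e1)} = [k] ∖ {1}`.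
Composing with a transposition of `[r]` shows that `f(e1)` is equidistributed among the
surjections `[k-1] → [r]`, so the event has `|Y| · |Surj| / r` elements, where `Y` is the set of
pairs `(t, S)` with `S ∈ ℳ_{p,r}` and `S_t = [k] ∖ {1}`. Deleting the coordinate `t` identifies the
`S` with a given `t` with `ℳ_{q,r-1}`, so `|Y| = r · |ℳ_{q,r-1}|`; and `|Ω| = |𝒮_{p,r}| · |Surj|`,
which is nonzero because `r ≤ k - 1`. -/

open Function

section SurjectionFibers

variable {D β : Type*} [DecidableEq β]

lemma card_surjective_apply_eq_congr (e : D) (t t' : β) :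
    Nat.card {f : D → β // Surjective f ∧ f e = t} =
      Nat.card {f : D → β // Surjective f ∧ f e = t'} :=
  Nat.card_congr <| (Equiv.arrowCongr (Equiv.refl D) (Equiv.swap t t')).subtypeEquiv fun f => by
    change _ ↔ Surjective (Equiv.swap t t' ∘ f) ∧ Equiv.swap t t' (f e) = t'
    rw [Equiv.comp_surjective, Equiv.swap_apply_eq_iff, Equiv.swap_apply_right]

lemma card_surjective_eq_card_mul [Finite D] [Fintype β] (e : D) (t : β) :
    Nat.card {f : D → β // Surjective f} =
      Nat.card β * Nat.card {f : D → β // Surjective f ∧ f e = t} := by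
  rw [← Nat.card_congr (Equiv.sigmaFiberEquiv fun f : {f : D → β // Surjective f} => f.1 e),
    Nat.card_sigma]
  calc _ = ∑ _t' : β, Nat.card {f : D → β // Surjective f ∧ f e = t} :=
        Finset.sum_congr rfl fun t' _ => by
          rw [Nat.card_congr (Equiv.subtypeSubtypeEquivSubtypeInter
            (fun f : D → β => Surjective f) fun f => f e = t')]
          exact card_surjective_apply_eq_congr e t' t
    _ = _ := by simp [Nat.card_eq_fintype_card]

lemma card_mul_card_surjective_apply [Finite D] [Fintype β] {X : Type*} [Finite X]
    (Y : β → X → Prop) (e : D) :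
    Nat.card β * Nat.card {x : X × (D → β) // Surjective x.2 ∧ Y (x.2 e) x.1} =
      Nat.card {y : β × X // Y y.1 y.2} * Nat.card {f : D → β // Surjective f} := by
  classical
  have := Fintype.ofFinite X
  let split : {x : X × (D → β) // Surjective x.2 ∧ Y (x.2 e) x.1} ≃
      Σ y : {y : β × X // Y y.1 y.2}, {f : D → β // Surjective f ∧ f e = y.1.1} :=
    { toFun := fun x => ⟨⟨(x.1.2 e, x.1.1), x.2.2⟩, x.1.2, x.2.1, rfl⟩
      invFun := fun y => ⟨(y.1.1.2, y.2.1), y.2.2.1, by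
        change Y (y.2.1 e) _
        rw [y.2.2.2]
        exact y.1.2⟩
      left_inv := fun _ => rfl
      right_inv := by
        rintro ⟨⟨⟨t, S⟩, hY⟩, f, hf, hfe⟩
        change f e = t at hfe
        subst hfe
        rfl }
  rw [Nat.card_congr split, Nat.card_sigma, Finset.mul_sum]
  calc _ = ∑ _y : {y : β × X // Y y.1 y.2}, Nat.card {f : D → β // Surjective f} :=
        Finset.sum_congr rfl fun y _ => (card_surjective_eq_card_mul e y.1.1).symm
    _ = _ := by simp [Nat.card_eq_fintype_card]

end SurjectionFibers

lemma Fin.card_subtype_eq_ite_add_succAbove {m : ℕ} (P : Fin (m + 1) → Prop) [DecidablePred P]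
    (t : Fin (m + 1)) :
    Nat.card {i // P i} = (if P t then 1 else 0) + Nat.card {i : Fin m // P (t.succAbove i)} := by
  simp only [Nat.card_eq_fintype_card, Fintype.card_subtype, Finset.card_filter]
  exact Fin.sum_univ_succAbove _ t

def MprMemZ (k r : ℕ) [NeZero k] (q : ZMod k → ℤ) (T : Fin r → Finset (ZMod k)) : Prop :=
  (∀ j, (Nat.card {i : Fin r // j ∈ T i} : ℤ) = q j) ∧ ∀ i, T i ≠ Finset.univ

section RemoveNth

variable {k m : ℕ} [NeZero k] {p : ZMod k → ℕ}

lemma mprMem_iff_removeNth {S : Fin (m + 1) → Finset (ZMod k)} {t : Fin (m + 1)}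
    (ht : S t ≠ Finset.univ) :
    MprMem k (m + 1) p S ↔
      MprMemZ k m (fun j => p j - if j ∈ S t then 1 else 0) (t.removeNth S) := by
  have hcount (j : ZMod k) := Fin.card_subtype_eq_ite_add_succAbove (fun i => j ∈ S i) t
  simp only [MprMem, SprMem, MprMemZ, Fin.removeNth_apply]
  refine and_congr (forall_congr' fun j => ?_) ⟨fun h i => h _, fun h i => ?_⟩
  · rw [hcount j]
    split_ifs <;> omega
  · obtain rfl | ⟨i, rfl⟩ := Fin.eq_self_or_eq_succAbove t i
    exacts [ht, h i]

lemma card_mprMem_apply_eq {U : Finset (ZMod k)} (hU : U ≠ Finset.univ) (t : Fin (m + 1)) :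
    Nat.card {S // MprMem k (m + 1) p S ∧ S t = U} =
      McardZ k m (fun j => p j - if j ∈ U then 1 else 0) := by
  let e := (Fin.insertNthEquiv (fun _ => Finset (ZMod k)) t).symm.subtypeEquiv
    (p := fun S => MprMem k (m + 1) p S ∧ S t = U)
    (q := fun x => x.1 = U ∧ MprMemZ k m (fun j => p j - if j ∈ U then 1 else 0) x.2) fun S => by
      change _ ↔ S t = U ∧ _
      constructor
      · rintro ⟨hS, rfl⟩
        exact ⟨rfl, (mprMem_iff_removeNth hU).1 hS⟩
      · rintro ⟨rfl, hS⟩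
        exact ⟨(mprMem_iff_removeNth hU).2 hS, rfl⟩
  rw [Nat.card_congr (e.trans (Equiv.subtypeProdEquivProd (p := (· = U))
    (q := MprMemZ k m fun j => p j - if j ∈ U then 1 else 0))), Nat.card_prod, Nat.card_unique,
    one_mul, McardZ]
  rfl

lemma card_mprMem_pair_eq {U : Finset (ZMod k)} (hU : U ≠ Finset.univ) :
    Nat.card {y : Fin (m + 1) × (Fin (m + 1) → Finset (ZMod k)) //
        MprMem k (m + 1) p y.2 ∧ y.2 y.1 = U} =
      (m + 1) * McardZ k m (fun j => p j - if j ∈ U then 1 else 0) := by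
  rw [Nat.card_congr
    (Equiv.subtypeProdEquivSigmaSubtype fun t S => MprMem k (m + 1) p S ∧ S t = U), Nat.card_sigma]
  simp [card_mprMem_apply_eq hU]

end RemoveNth

lemma nonempty_surjective_fin_of_le_card {D : Type*} [Fintype D] {r : ℕ} (hr : 0 < r)
    (h : r ≤ Fintype.card D) : Nonempty {f : D → Fin r // Surjective f} :=
  let ⟨f, hf⟩ := exists_surjective_iff.2
    ⟨⟨fun _ => ⟨0, hr⟩⟩, Function.Embedding.nonempty_of_card_le (by simpa using h)⟩
  ⟨⟨f, hf⟩⟩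

section SampleSpace

variable {k r : ℕ} [NeZero k] {p : ZMod k → ℕ}

lemma card_omS :
    Nat.card (OmS k r p) =
      Scard k r p * Nat.card {f : {i : ZMod k // i ≠ 0} → Fin r // Surjective f} := by
  rw [Nat.card_congr Equiv.subtypeProdEquivProd, Nat.card_prod]
  rfl

lemma card_event_eq (e : {i : ZMod k // i ≠ 0}) (U : Finset (ZMod k)) :
    Nat.card {om : OmS k r p |
        om.1.1 (om.1.2 e) = U ∧ ∀ i, om.1.1 (om.1.2 i) ≠ Finset.univ} =
      Nat.card {x : (Fin r → Finset (ZMod k)) × ({i : ZMod k // i ≠ 0} → Fin r) //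
        Surjective x.2 ∧ (MprMem k r p x.1 ∧ x.1 (x.2 e) = U)} := by
  refine Nat.card_congr <| (Equiv.subtypeSubtypeEquivSubtypeInter _
    fun x : (Fin r → Finset (ZMod k)) × ({i : ZMod k // i ≠ 0} → Fin r) =>
      x.1 (x.2 e) = U ∧ ∀ i, x.1 (x.2 i) ≠ Finset.univ).trans <|
      Equiv.subtypeEquivRight fun x => ⟨?_, ?_⟩
  · rintro ⟨⟨hS, hf⟩, he, hne⟩
    exact ⟨hf, ⟨hS, hf.forall.2 hne⟩, he⟩
  · rintro ⟨hf, ⟨hS, hne⟩, he⟩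
    exact ⟨⟨hS, hf⟩, he, fun i => hne _⟩

end SampleSpace

theorem prob_Sf1_eq_compl_one_general (k r : ℕ) [NeZero k] (hr : 0 < r) (hrk : r < k)
    (p : ZMod k → ℕ)
    (e1 : {i : ZMod k // i ≠ 0}) :
    PrU {om : OmS k r p |
        om.1.1 (om.1.2 e1) = Finset.univ \ {(1 : ZMod k)} ∧
        ∀ i : {i : ZMod k // i ≠ 0}, om.1.1 (om.1.2 i) ≠ Finset.univ} =
    (McardZ k (r - 1) (fun j => if j = 1 then (p j : ℤ) else (p j : ℤ) - 1) : ℚ) /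
      (Scard k r p : ℚ) := by
  obtain ⟨m, rfl⟩ : ∃ m, r = m + 1 := ⟨r - 1, by omega⟩
  set U : Finset (ZMod k) := Finset.univ \ {1}
  have hU : U ≠ Finset.univ := by simp [U]
  have hq : (fun j => if j = 1 then (p j : ℤ) else p j - 1) =
      fun j => (p j : ℤ) - if j ∈ U then 1 else 0 := by
    funext j
    by_cases hj : j = 1 <;> simp [U, hj]
  have hsurj : Nat.card {f : {i : ZMod k // i ≠ 0} → Fin (m + 1) // Surjective f} ≠ 0 := by
    have hcard : m + 1 ≤ Fintype.card {i : ZMod k // i ≠ 0} := by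
      rw [Fintype.card_subtype_compl, ZMod.card, Fintype.card_unique]
      omega
    exact Nat.card_ne_zero.2 ⟨nonempty_surjective_fin_of_le_card hr hcard, inferInstance⟩
  have hevent : Nat.card {om : OmS k (m + 1) p |
      om.1.1 (om.1.2 e1) = U ∧ ∀ i, om.1.1 (om.1.2 i) ≠ Finset.univ} =
      McardZ k m (fun j => p j - if j ∈ U then 1 else 0) *
        Nat.card {f : {i : ZMod k // i ≠ 0} → Fin (m + 1) // Surjective f} := by
    have h := card_mul_card_surjective_apply (fun t S => MprMem k (m + 1) p S ∧ S t = U) e1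
    rw [Nat.card_fin, card_mprMem_pair_eq hU, mul_assoc] at h
    rw [card_event_eq]
    exact Nat.eq_of_mul_eq_mul_left (by omega) h
  rw [PrU, hevent, card_omS, Nat.add_sub_cancel, hq]
  push_cast
  exact mul_div_mul_right _ _ (Nat.cast_ne_zero.2 hsurj)

/-- Lemma 14 (end of proof): for `(S,f)` uniform on `Ω`, the probability of the event
"`S_{f(1)} = {2,3,…,k}` and `S_{f(i)} ≠ [k]` for all `i ∈ [k-1]`" equals
`|ℳ_{q,r-1}| / |𝒮_{p,r}|`, where `q = (p_1, p_2 - 1, …, p_k - 1)`. Here `e1`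
denotes the element `1` of `[k-1]`, and `{2,…,k}` is `[k] ∖ {1}`. -/
theorem prob_Sf1_eq_compl_one (k r : ℕ) [NeZero k] (hk : 2 ≤ k) (hr : 0 < r) (hrk : r < k)
    (p : ZMod k → ℕ)
    (hS : Nonempty {S : Fin r → Finset (ZMod k) // SprMem k r p S})
    (e1 : {i : ZMod k // i ≠ 0}) (he1 : e1.1 = 1) :
    PrU {om : OmS k r p |
        om.1.1 (om.1.2 e1) = Finset.univ \ {(1 : ZMod k)} ∧
        ∀ i : {i : ZMod k // i ≠ 0}, om.1.1 (om.1.2 i) ≠ Finset.univ} =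
    (McardZ k (r - 1) (fun j => if j = 1 then (p j : ℤ) else (p j : ℤ) - 1) : ℚ) /
      (Scard k r p : ℚ) :=
  prob_Sf1_eq_compl_one_general k r hr hrk p e1
end

section
/- Let k and r be positive integers with r < k and let p = (p_1,…,p_k) be a tuple of non-negative integers with S_{p,r} non-empty. Let D ⊆ [k−1] be a subset containing some integer a > 1 with a−1 ∉ D, and for i∈[k−1] set c_i = i−1 if i∈D and c_i = i otherwise. Then Σ_{π∈𝔖_k} sgn(π) · Pr( ∩_{i∈[k−1]} J^{f(i)}_{c_i, π(i)+1} ) = 0, all subscripts taken cyclically modulo k (in particular J^t_{0,j} means J^t_{k,j} and π(i)+1 is taken modulo k). -/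
open Finset

/- The events of row `a` and of row `a - 1` start at the same point `c_a = c_{a-1} = a - 1`, so
exchanging `f a` and `f (a - 1)` is a measure-preserving bijection of `Ω` that carries the event
of `π` to the event of `π ∘ (a, a - 1)`. The signed sum is therefore alternating under right
multiplication by a transposition, hence zero, exactly as a determinant with two equal rows. -/

theorem Equiv.Perm.sum_sign_mul_eq_zero_of_mul_swap {α R : Type*} [Fintype α] [DecidableEq α]
    [Ring R] {x y : α} (hxy : x ≠ y) (F : Equiv.Perm α → R)
    (hF : ∀ π, F (π * Equiv.swap x y) = F π) :
    ∑ π : Equiv.Perm α, ((Equiv.Perm.sign π : ℤ) : R) * F π = 0 :=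
  Finset.sum_ninvolution (· * Equiv.swap x y)
    (fun π => by simp [hF, Equiv.Perm.sign_swap hxy])
    (fun π _ => (not_congr Equiv.mul_swap_eq_iff).mpr hxy) (fun _ => Finset.mem_univ _)
    (Equiv.mul_swap_involutive x y)

theorem PrU_preimage_equiv {Om : Type} (e : Om ≃ Om) (A : Set Om) : PrU (e ⁻¹' A) = PrU A := by
  rw [PrU, PrU, Nat.card_congr (e.subtypeEquiv fun _ => Iff.rfl : e ⁻¹' A ≃ A)]

section relabel

variable {k r : ℕ} [NeZero k] {p : ZMod k → ℕ}

def OmS.relabel (σ : Equiv.Perm {i : ZMod k // i ≠ 0}) : OmS k r p ≃ OmS k r p where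
  toFun om := ⟨(om.1.1, om.1.2 ∘ σ), om.2.1, om.2.2.comp σ.surjective⟩
  invFun om := ⟨(om.1.1, om.1.2 ∘ σ.symm), om.2.1, om.2.2.comp σ.symm.surjective⟩
  left_inv om := by ext <;> simp
  right_inv om := by ext <;> simp

def Jinter (c : {i : ZMod k // i ≠ 0} → ZMod k) (π : Equiv.Perm (ZMod k)) : Set (OmS k r p) :=
  ⋂ i : {i : ZMod k // i ≠ 0}, {om : OmS k r p | Jmem k r p om i (c i) (π i.1 + 1)}

theorem relabel_swap_preimage_Jinter {c : {i : ZMod k // i ≠ 0} → ZMod k}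
    {a b : {i : ZMod k // i ≠ 0}} (hc : c a = c b) (π : Equiv.Perm (ZMod k)) :
    OmS.relabel (Equiv.swap a b) ⁻¹' Jinter (r := r) (p := p) c π =
      Jinter c (π * Equiv.swap a.1 b.1) := by
  have hcswap : ∀ i, c (Equiv.swap a b i) = c i := fun i => by
    rcases eq_or_ne i a with rfl | hia
    · simp [hc]
    rcases eq_or_ne i b with rfl | hib
    · simp [hc]
    rw [Equiv.swap_apply_of_ne_of_ne hia hib]
  ext om
  simp only [Jinter, Set.mem_preimage, Set.mem_iInter, Set.mem_ofPred_eq, Equiv.Perm.mul_apply,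
    Subtype.val_injective.swap_apply]
  exact (Equiv.swap a b).forall_congr fun i => by
    rw [hcswap, Equiv.swap_apply_self]
    rfl

end relabel

theorem signed_sum_Mgamma_D_general (k r : ℕ) [NeZero k]
    (p : ZMod k → ℕ)
    (D : Finset {i : ZMod k // i ≠ 0}) (a : {i : ZMod k // i ≠ 0})
    (haD : a ∈ D) (ha1 : 2 ≤ a.1.val)
    (haD' : ∀ b : {i : ZMod k // i ≠ 0}, b.1 = a.1 - 1 → b ∉ D) :
    ∑ pi : Equiv.Perm (ZMod k), ((Equiv.Perm.sign pi : ℤ) : ℚ) *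
      PrU (⋂ i : {i : ZMod k // i ≠ 0},
        {om : OmS k r p |
          Jmem k r p om i (if i ∈ D then i.1 - 1 else i.1) (pi i.1 + 1)}) = 0 := by
  have : Fact (1 < k) := ⟨by linarith [ZMod.val_lt a.1]⟩
  have ha_ne_one : a.1 ≠ 1 := fun h => by rw [h, ZMod.val_one] at ha1; omega
  let b : {i : ZMod k // i ≠ 0} := ⟨a.1 - 1, sub_ne_zero.mpr ha_ne_one⟩
  have hab : a.1 ≠ b.1 := fun h => one_ne_zero (sub_eq_self.mp h.symm)
  let c : {i : ZMod k // i ≠ 0} → ZMod k := fun i => if i ∈ D then i.1 - 1 else i.1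
  have hc : c a = c b := by simp [c, b, haD, haD' b rfl]
  refine Equiv.Perm.sum_sign_mul_eq_zero_of_mul_swap hab (fun π => PrU (Jinter c π)) fun π => ?_
  rw [← relabel_swap_preimage_Jinter hc, PrU_preimage_equiv]

/-- Claim of Section 5.3: if `D ⊆ [k-1]` contains an integer `a > 1` but not `a - 1`,
then `Σ_{π ∈ 𝔖_k} sgn(π) · Pr(∩_{i ∈ [k-1]} J^{f(i)}_{c_i, π(i)+1}) = 0`, where
`c_i = i - 1` if `i ∈ D` and `c_i = i` otherwise (cyclically modulo `k`). -/
theorem signed_sum_Mgamma_D (k r : ℕ) [NeZero k] (hr : 0 < r) (hrk : r < k)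
    (p : ZMod k → ℕ)
    (hS : Nonempty {S : Fin r → Finset (ZMod k) // SprMem k r p S})
    (D : Finset {i : ZMod k // i ≠ 0}) (a : {i : ZMod k // i ≠ 0})
    (haD : a ∈ D) (ha1 : 2 ≤ a.1.val)
    (haD' : ∀ b : {i : ZMod k // i ≠ 0}, b.1 = a.1 - 1 → b ∉ D) :
    ∑ pi : Equiv.Perm (ZMod k), ((Equiv.Perm.sign pi : ℤ) : ℚ) *
      PrU (⋂ i : {i : ZMod k // i ≠ 0},
        {om : OmS k r p |
          Jmem k r p om i (if i ∈ D then i.1 - 1 else i.1) (pi i.1 + 1)}) = 0 :=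
  signed_sum_Mgamma_D_general k r p D a haD ha1 haD'
end
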